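/- (d'Alembert's Lemma) Let p be a non-constant complex polynomial and a a complex number with p(a) ≠ 0. Then for every ε > 0 there exists b with |b - a| < ε and |p(b)| < |p(a)|. -/
import Mathlib

theorem dAlembert_lemma (p : Polynomial ℂ) (hp : 1 ≤ p.degree) (a : ℂ)
    (ha : p.eval a ≠ 0) :
    ∀ ε > 0, ∃ b : ℂ, ‖b - a‖ < ε ∧ ‖p.eval b‖ < ‖p.eval a‖ := by
  intro ε hε
  by_contra h
  push_neg at h
  have hmin : IsLocalMin (norm ∘ fun z => p.eval z) a := by
    filter_upwards [Metric.ball_mem_nhds a hε] with z hz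
    exact h z (by simpa [dist_eq_norm] using hz)
  have hd : ∀ᶠ z in nhds a, DifferentiableAt ℂ (fun z => p.eval z) z :=
    Filter.Eventually.of_forall fun z => p.differentiableAt
  rcases Complex.eventually_eq_or_eq_zero_of_isLocalMin_norm hd hmin with hconst | hzero
  · have : p - Polynomial.C (p.eval a) = 0 := by
      apply Polynomial.eq_zero_of_infinite_isRoot
      apply Set.Infinite.mono (s := {z | p.eval z = p.eval a})
      · intro z hz
        simp [Polynomial.IsRoot, Set.mem_setOf_eq.mp hz]
      · exact infinite_of_mem_nhds a hconst
    have hdeg : p.degree ≤ 0 := by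
      have : p = Polynomial.C (p.eval a) := by linear_combination (norm := ring_nf) this
      rw [this]
      exact Polynomial.degree_C_le
    exact absurd (le_trans hp hdeg) (by norm_num)
  · exact ha hzero
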